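/- arXiv:1503.07281 — 5 statements merged into one kernel-verified Lean document; each statement's English description precedes it below -/
import Mathlib

section
/- Let d = gcd(m, ℓ). If there exist n distinct m-th roots of unity x_1,…,x_n with x_1^ℓ + ⋯ + x_n^ℓ = 0, then there exist non-negative integers a_1,…,a_{m/d}, each at most d, summing to n, such that Σ a_i z_i = 0 where z_1,…,z_{m/d} are the (m/d)-th roots of unity. -/
/-!
Put `y i = x i ^ ℓ`. Since `x i ^ m = 1`, each `y i` is an `(m / d)`-th root of unity, so
`a z := #{i | y i = z}` is supported on the `(m / d)`-th roots of unity, sums to `n`, and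
`∑ a z * z = ∑ y i = 0`. If `x i ^ ℓ = x j ^ ℓ`, then `x j / x i` is both an `m`-th and an
`ℓ`-th root of unity, hence a `d`-th one; as `x` is injective, each fibre has at most `d` elements.
-/

open Finset Polynomial

theorem Finset.sum_card_fiberwise_nsmul {ι M : Type*} [AddCommMonoid M] [DecidableEq M]
    {s : Finset ι} {t : Finset M} {f : ι → M} (h : ∀ i ∈ s, f i ∈ t) :
    ∑ b ∈ t, #{a ∈ s | f a = b} • b = ∑ a ∈ s, f a := by
  rw [← sum_fiberwise_of_maps_to h f]
  refine sum_congr rfl fun b _ => ?_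
  rw [sum_congr rfl fun a ha => (mem_filter.mp ha).2, sum_const]

section RootsOfUnity

variable {K : Type*} [Field K] {m : ℕ}

theorem pow_mem_nthRootsFinset_div_gcd (hm : 0 < m) {y : K} (hy : y ^ m = 1) (ℓ : ℕ) :
    y ^ ℓ ∈ nthRootsFinset (m / m.gcd ℓ) (1 : K) := by
  have hdm : 0 < m / m.gcd ℓ := Nat.div_pos (Nat.gcd_le_left ℓ hm) (Nat.gcd_pos_of_pos_left ℓ hm)
  rw [mem_nthRootsFinset hdm, ← pow_mul, ← Nat.mul_div_assoc _ (Nat.gcd_dvd_left m ℓ),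
    mul_comm, Nat.mul_div_assoc _ (Nat.gcd_dvd_right m ℓ), pow_mul, hy, one_pow]

theorem card_filter_pow_eq_le_gcd {ι : Type*} [Fintype ι] [DecidableEq K] (hm : 0 < m) {x : ι → K}
    (hinj : Function.Injective x) (hx : ∀ i, x i ^ m = 1) (ℓ : ℕ) (z : K) :
    #{i | x i ^ ℓ = z} ≤ m.gcd ℓ := by
  obtain hempty | ⟨i₀, hi₀⟩ := eq_empty_or_nonempty {i | x i ^ ℓ = z}
  · simp [hempty]
  have hi₀z : x i₀ ^ ℓ = z := (mem_filter.mp hi₀).2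
  have hx₀ : x i₀ ≠ 0 := fun h => by simpa [h, zero_pow hm.ne'] using hx i₀
  calc #{i | x i ^ ℓ = z}
      ≤ (nthRoots (m.gcd ℓ) (1 : K)).toFinset.card := by
        refine card_le_card_of_injOn (fun j => x j / x i₀) (fun j hj => ?_) fun j₁ _ j₂ _ h => ?_
        · have hjz : x j ^ ℓ = z := (mem_filter.mp hj).2
          rw [mem_coe, Multiset.mem_toFinset, mem_nthRoots (Nat.gcd_pos_of_pos_left ℓ hm),
            pow_gcd_eq_one, div_pow, div_pow, hx, hx, hjz, hi₀z, div_one,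
            div_self (hi₀z ▸ pow_ne_zero ℓ hx₀)]
          exact ⟨rfl, rfl⟩
        · exact hinj ((div_left_inj' hx₀).mp h)
    _ ≤ m.gcd ℓ := (Multiset.toFinset_card_le _).trans (card_nthRoots _ _)

end RootsOfUnity

theorem height_forward_general (m ℓ n : ℕ) (hm : 0 < m) (d : ℕ) (hd : d = Nat.gcd m ℓ)
    (x : Fin n → ℂ) (hinj : Function.Injective x) (hx : ∀ i, x i ^ m = 1)
    (hsum : ∑ i, (x i) ^ ℓ = 0) :
    ∃ a : ℂ → ℕ, (∀ z, a z ≤ d) ∧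
      (∑ z ∈ Polynomial.nthRootsFinset (m / d) (1 : ℂ), a z) = n ∧
      ∑ z ∈ Polynomial.nthRootsFinset (m / d) (1 : ℂ), (a z : ℂ) * z = 0 := by
  subst hd
  have hmaps : ∀ i ∈ (univ : Finset (Fin n)), x i ^ ℓ ∈ nthRootsFinset (m / m.gcd ℓ) (1 : ℂ) :=
    fun i _ => pow_mem_nthRootsFinset_div_gcd hm (hx i) ℓ
  refine ⟨fun z => #{i | x i ^ ℓ = z}, card_filter_pow_eq_le_gcd hm hinj hx ℓ, ?_, ?_⟩
  · rw [← card_eq_sum_card_fiberwise hmaps, card_univ, Fintype.card_fin]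
  · simp_rw [← nsmul_eq_mul]
    rw [sum_card_fiberwise_nsmul hmaps, hsum]

theorem height_forward (m ℓ n : ℕ) (hm : 0 < m) (hℓ : 0 < ℓ) (hn2 : 2 ≤ n)
    (hnm : n ≤ m) (d : ℕ) (hd : d = Nat.gcd m ℓ)
    (x : Fin n → ℂ) (hinj : Function.Injective x) (hx : ∀ i, x i ^ m = 1)
    (hsum : ∑ i, (x i) ^ ℓ = 0) :
    ∃ a : ℂ → ℕ, (∀ z, a z ≤ d) ∧
      (∑ z ∈ Polynomial.nthRootsFinset (m / d) (1 : ℂ), a z) = n ∧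
      ∑ z ∈ Polynomial.nthRootsFinset (m / d) (1 : ℂ), (a z : ℂ) * z = 0 :=
  height_forward_general m ℓ n hm d hd x hinj hx hsum
end

section
/- Let d = gcd(m, ℓ). If there are non-negative integers a_1,…,a_{m/d}, each at most d, with Σ a_i = n and Σ a_i z_i = 0 where z_1,…,z_{m/d} enumerate the (m/d)-th roots of unity, then there exist n pairwise distinct m-th roots of unity x_1,…,x_n with x_1^ℓ + ⋯ + x_n^ℓ = 0. -/
/-!
With `d = gcd m ℓ`, the map `x ↦ x ^ ℓ` sends the `m`-th roots of unity onto the `(m / d)`-th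
roots of unity, and each fiber contains a coset of the `d`-th roots of unity, so it has at least
`d` elements. Choosing `a z ≤ d` distinct elements in the fiber over each `z` gives `∑ a z = n`
distinct `m`-th roots of unity whose `ℓ`-th powers sum to `∑ a z * z = 0`.
-/

open Polynomial Finset

theorem IsPrimitiveRoot.pow_div_gcd {M : Type*} [CommMonoid M] {ζ : M} {k : ℕ}
    (h : IsPrimitiveRoot ζ k) (hk : k ≠ 0) (ℓ : ℕ) :
    IsPrimitiveRoot (ζ ^ ℓ) (k / k.gcd ℓ) := by
  rcases eq_or_ne ℓ 0 with rfl | hℓ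
  · simp [Nat.div_self (Nat.pos_of_ne_zero hk)]
  · rw [h.eq_orderOf, ← orderOf_pow' ζ hℓ]
    exact .orderOf _

section Domain

variable {R : Type*} [CommRing R] [IsDomain R] {ζ : R} {m : ℕ}

theorem IsPrimitiveRoot.exists_pow_pow_eq (hζ : IsPrimitiveRoot ζ m) (hm : 0 < m) (ℓ : ℕ)
    {z : R} (hz : z ^ (m / m.gcd ℓ) = 1) : ∃ k, (ζ ^ k) ^ ℓ = z := by
  have : NeZero (m / m.gcd ℓ) :=
    ⟨(Nat.div_pos (Nat.gcd_le_left ℓ hm) (Nat.gcd_pos_of_pos_left ℓ hm)).ne'⟩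
  obtain ⟨k, -, hk⟩ := (hζ.pow_div_gcd hm.ne' ℓ).eq_pow_of_pow_eq_one hz
  exact ⟨k, by rw [← pow_mul, mul_comm, pow_mul, hk]⟩

theorem IsPrimitiveRoot.gcd_le_card_filter_pow_eq [DecidableEq R] (hζ : IsPrimitiveRoot ζ m)
    (hm : 0 < m) (ℓ : ℕ) {z : R} (hz : z ^ (m / m.gcd ℓ) = 1) :
    m.gcd ℓ ≤ #{x ∈ nthRootsFinset m (1 : R) | x ^ ℓ = z} := by
  set d := m.gcd ℓ
  have hd : 0 < d := Nat.gcd_pos_of_pos_left ℓ hm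
  obtain ⟨k, hk⟩ := hζ.exists_pow_pow_eq hm ℓ hz
  have hω : IsPrimitiveRoot (ζ ^ (m / d)) d :=
    hζ.pow hm (Nat.div_mul_cancel (Nat.gcd_dvd_left m ℓ)).symm
  have hy : ζ ^ k ≠ 0 := pow_ne_zero k (hζ.ne_zero hm.ne')
  have hym : (ζ ^ k) ^ m = 1 := by rw [← pow_mul, mul_comm, pow_mul, hζ.pow_eq_one, one_pow]
  -- the fiber over `z` contains the coset `ζ ^ k * μ_d`
  calc d = #(nthRootsFinset d (1 : R)) := hω.card_nthRootsFinset.symm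
    _ ≤ _ := by
      refine card_le_card_of_injOn (ζ ^ k * ·) (fun w hw ↦ ?_) (mul_right_injective₀ hy).injOn
      rw [mem_coe, Polynomial.mem_nthRootsFinset hd] at hw
      have hwd : ∀ e, d ∣ e → w ^ e = 1 := fun e ⟨c, hc⟩ ↦ by rw [hc, pow_mul, hw, one_pow]
      simp only [mem_coe, mem_filter, Polynomial.mem_nthRootsFinset hm, mul_pow, hym, hk,
        hwd m (Nat.gcd_dvd_left m ℓ), hwd ℓ (Nat.gcd_dvd_right m ℓ), mul_one, and_self]

end Domain

theorem Finset.exists_subset_sum_eq_sum_nsmul {α M : Type*} [DecidableEq α] [AddCommMonoid M]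
    [DecidableEq M] (s : Finset α) (g : α → M) (S : Finset M) (a : M → ℕ)
    (ha : ∀ z ∈ S, a z ≤ #{x ∈ s | g x = z}) :
    ∃ B ⊆ s, #B = ∑ z ∈ S, a z ∧ ∑ x ∈ B, g x = ∑ z ∈ S, a z • z := by
  choose! T hTs hTcard using fun z hz ↦ exists_subset_card_eq (ha z hz)
  have hT : ∀ z ∈ S, ∀ x ∈ T z, x ∈ s ∧ g x = z := fun z hz x hx ↦ mem_filter.mp (hTs z hz hx)
  have hdisj : (S : Set M).PairwiseDisjoint T := fun z hz z' hz' hne ↦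
    disjoint_left.mpr fun x hx hx' ↦ hne ((hT z hz x hx).2.symm.trans (hT z' hz' x hx').2)
  refine ⟨S.biUnion T, fun x hx ↦ ?_, ?_, ?_⟩
  · obtain ⟨z, hz, hxz⟩ := mem_biUnion.mp hx
    exact (hT z hz x hxz).1
  · rw [card_biUnion hdisj]
    exact sum_congr rfl hTcard
  · rw [sum_biUnion hdisj]
    refine sum_congr rfl fun z hz ↦ ?_
    rw [sum_congr rfl fun x hx ↦ (hT z hz x hx).2, sum_const, hTcard z hz]

theorem Finset.exists_injective_fin_sum_eq {α M : Type*} [AddCommMonoid M] (s : Finset α)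
    {n : ℕ} (hn : #s = n) (f : α → M) :
    ∃ x : Fin n → α, Function.Injective x ∧ (∀ i, x i ∈ s) ∧ ∑ i, f (x i) = ∑ y ∈ s, f y := by
  let e : Fin n ≃ s := (finCongr hn.symm).trans s.equivFin.symm
  refine ⟨fun i ↦ e i, Subtype.val_injective.comp e.injective, fun i ↦ (e i).2, ?_⟩
  rw [← sum_coe_sort s]
  exact Fintype.sum_equiv e _ _ fun _ ↦ rfl

theorem height_converse_general (m ℓ n : ℕ) (hm : 0 < m)
    (d : ℕ) (hd : d = Nat.gcd m ℓ)
    (a : ℂ → ℕ) (ha : ∀ z, a z ≤ d)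
    (hsum : (∑ z ∈ Polynomial.nthRootsFinset (m / d) (1 : ℂ), a z) = n)
    (hvanish : ∑ z ∈ Polynomial.nthRootsFinset (m / d) (1 : ℂ), (a z : ℂ) * z = 0) :
    ∃ x : Fin n → ℂ, Function.Injective x ∧ (∀ i, x i ^ m = 1) ∧
      ∑ i, (x i) ^ ℓ = 0 := by
  classical
  subst hd
  have hζ := Complex.isPrimitiveRoot_exp m hm.ne'
  have hmd : 0 < m / m.gcd ℓ :=
    Nat.div_pos (Nat.gcd_le_left ℓ hm) (Nat.gcd_pos_of_pos_left ℓ hm)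
  obtain ⟨B, hBsub, hBcard, hBsum⟩ :=
    exists_subset_sum_eq_sum_nsmul (nthRootsFinset m (1 : ℂ)) (· ^ ℓ) _ a fun z hz ↦
      (ha z).trans <| hζ.gcd_le_card_filter_pow_eq hm ℓ ((mem_nthRootsFinset hmd 1).mp hz)
  obtain ⟨x, hinj, hxB, hxsum⟩ := B.exists_injective_fin_sum_eq (hBcard.trans hsum) (· ^ ℓ)
  refine ⟨x, hinj, fun i ↦ (mem_nthRootsFinset hm 1).mp (hBsub (hxB i)), ?_⟩
  simpa only [hxsum, hBsum, nsmul_eq_mul] using hvanish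

theorem height_converse (m ℓ n : ℕ) (hm : 0 < m) (hℓ : 0 < ℓ) (hn2 : 2 ≤ n)
    (hnm : n ≤ m) (d : ℕ) (hd : d = Nat.gcd m ℓ)
    (a : ℂ → ℕ) (ha : ∀ z, a z ≤ d)
    (hsum : (∑ z ∈ Polynomial.nthRootsFinset (m / d) (1 : ℂ), a z) = n)
    (hvanish : ∑ z ∈ Polynomial.nthRootsFinset (m / d) (1 : ℂ), (a z : ℂ) * z = 0) :
    ∃ x : Fin n → ℂ, Function.Injective x ∧ (∀ i, x i ^ m = 1) ∧
      ∑ i, (x i) ^ ℓ = 0 :=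
  height_converse_general m ℓ n hm d hd a ha hsum hvanish
end

section
/- If m = p^a is a prime power and m-th roots of unity x_1,…,x_n satisfy x_1 + ⋯ + x_n = 0 with n ≥ 1, then p divides n. -/
open Polynomial

theorem prime_power_vanishing (p a n : ℕ) (hp : p.Prime) (ha : 1 ≤ a) (hn : 1 ≤ n)
    (x : Fin n → ℂ) (hx : ∀ i, x i ^ (p ^ a) = 1) (hsum : ∑ i, x i = 0) :
    p ∣ n := by
  haveI : Fact p.Prime := ⟨hp⟩
  set m := p ^ a with hm
  have hm0 : 0 < m := pow_pos hp.pos a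
  haveI : NeZero m := ⟨hm0.ne'⟩
  set ζ : ℂ := Complex.exp (2 * Real.pi * Complex.I / m)
  have hζ : IsPrimitiveRoot ζ m := Complex.isPrimitiveRoot_exp m hm0.ne'
  -- exponents
  choose e he hζe using fun i => hζ.eq_pow_of_pow_eq_one (hx i)
  set P : ℤ[X] := ∑ i, X ^ (e i) with hP
  have haevalP : aeval ζ P = 0 := by
    rw [hP]
    simp only [map_sum, aeval_X_pow]
    simpa [hζe] using hsum
  have hint : IsIntegral ℤ ζ := hζ.isIntegral hm0
  have hdvd : minpoly ℤ ζ ∣ P := minpoly.isIntegrallyClosed_dvd hint haevalP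
  rw [← Polynomial.cyclotomic_eq_minpoly hζ hm0] at hdvd
  obtain ⟨Q, hQ⟩ := hdvd
  have h1 : P.eval 1 = (n : ℤ) := by
    simp [hP, eval_finset_sum]
  have h2 : P.eval 1 = (p : ℤ) * Q.eval 1 := by
    rw [hQ, eval_mul]
    obtain ⟨b, rfl⟩ := Nat.exists_eq_add_of_le ha
    rw [hm, add_comm 1 b, Polynomial.eval_one_cyclotomic_prime_pow]
  have : (p : ℤ) ∣ (n : ℤ) := ⟨Q.eval 1, by rw [← h1, h2]⟩
  exact_mod_cast this
end

section
/- For m = 15, there are no m-th roots of unity x_1,…,x_7 with x_1 + ⋯ + x_7 = 0; i.e., 7 ∉ W(15). -/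
open Polynomial Finset

/-- Powers `1, z, ..., z^7` of a primitive 15th root of unity are `ℤ`-linearly
independent. -/
lemma lin_indep_pow_15 {z : ℂ} (hz : IsPrimitiveRoot z 15) (m : ℕ → ℤ)
    (h : ∑ t ∈ Finset.range 8, (m t : ℂ) * z ^ t = 0) : ∀ t < 8, m t = 0 := by
  set R : ℚ[X] := ∑ t ∈ Finset.range 8, C ((m t : ℚ)) * X ^ t with hR
  have haev : aeval z R = 0 := by
    rw [hR]
    simp only [map_sum, map_mul, map_pow, aeval_C, aeval_X]
    simpa using h
  have hmin : cyclotomic 15 ℚ = minpoly ℚ z := cyclotomic_eq_minpoly_rat hz (by norm_num)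
  have hdvd : minpoly ℚ z ∣ R := minpoly.dvd ℚ z haev
  have hdeg : R.degree < (minpoly ℚ z).degree := by
    rw [← hmin, degree_cyclotomic]
    have h8 : Nat.totient 15 = 8 := by decide
    rw [h8]
    refine lt_of_le_of_lt (degree_sum_le _ _) ?_
    rw [Finset.sup_lt_iff (bot_lt_iff_ne_bot.mpr (by simp))]
    intro t ht
    refine lt_of_le_of_lt (degree_C_mul_X_pow_le _ _) ?_
    exact_mod_cast WithBot.coe_lt_coe.mpr (Finset.mem_range.mp ht)
  have hR0 : R = 0 := eq_zero_of_dvd_of_degree_lt hdvd hdeg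
  intro t ht
  have hc : R.coeff t = (m t : ℚ) := by
    rw [hR]
    simp only [finset_sum_coeff, coeff_C_mul, coeff_X_pow, mul_ite, mul_one, mul_zero,
      Finset.sum_ite_eq' (Finset.range 8)]
    simp [Finset.mem_range.mpr ht]
  rw [hR0] at hc
  simp only [coeff_zero] at hc
  exact_mod_cast hc.symm

/-- Arithmetic kernel: five nonnegative integers, pairwise congruent mod 3,
cannot sum to 7. -/
lemma aux_seven (K0 K1 K2 K3 K4 m1 m2 m3 m4 : ℤ) (h0 : 0 ≤ K0) (h1 : 0 ≤ K1) (h2 : 0 ≤ K2)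
    (h3 : 0 ≤ K3) (h4 : 0 ≤ K4) (e1 : K1 = K0 + 3 * m1) (e2 : K2 = K0 + 3 * m2)
    (e3 : K3 = K0 + 3 * m3) (e4 : K4 = K0 + 3 * m4) (hs : K0 + K1 + K2 + K3 + K4 = 7) :
    False := by
  omega

theorem seven_not_in_W_15 :
    ¬ ∃ x : Fin 7 → ℂ, (∀ i, x i ^ 15 = 1) ∧ ∑ i, x i = 0 := by
  rintro ⟨x, hx, hsum⟩
  set z : ℂ := Complex.exp (2 * Real.pi * Complex.I / 15) with hzdef
  have hz : IsPrimitiveRoot z 15 := Complex.isPrimitiveRoot_exp 15 (by norm_num)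
  -- exponents
  have hexp : ∀ i, ∃ k < 15, z ^ k = x i := fun i => hz.eq_pow_of_pow_eq_one (hx i)
  choose e he hze using hexp
  -- counts
  set n : ℕ → ℕ := fun k => (Finset.univ.filter (fun i : Fin 7 => e i = k)).card with hn
  have hmaps : ∀ i : Fin 7, i ∈ (Finset.univ : Finset (Fin 7)) → e i ∈ Finset.range 15 :=
    fun i _ => Finset.mem_range.mpr (he i)
  have hcard : ∑ k ∈ Finset.range 15, n k = 7 := by
    have := Finset.card_eq_sum_card_fiberwise hmaps
    simpa [hn] using this.symm
  have hsum' : ∑ k ∈ Finset.range 15, (n k : ℂ) * z ^ k = 0 := by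
    have h1 : ∑ k ∈ Finset.range 15, ∑ i ∈ Finset.univ.filter (fun i : Fin 7 => e i = k),
        z ^ e i = ∑ i : Fin 7, z ^ e i := Finset.sum_fiberwise_of_maps_to hmaps _
    have h2 : ∀ k, ∑ i ∈ Finset.univ.filter (fun i : Fin 7 => e i = k), z ^ e i
        = (n k : ℂ) * z ^ k := by
      intro k
      rw [Finset.sum_congr rfl (fun i hi => by
        rw [(Finset.mem_filter.mp hi).2])]
      simp [hn, mul_comm]
    have h3 : ∑ i : Fin 7, z ^ e i = 0 := by
      rw [← hsum]
      exact Finset.sum_congr rfl fun i _ => (hze i) ▸ rfl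
    rw [← h1] at h3
    rw [← h3]
    exact Finset.sum_congr rfl fun k _ => (h2 k).symm
  -- cyclotomic relation
  have hz15 : z ^ 15 = 1 := hz.pow_eq_one
  have hz3 : z ^ 3 ≠ 1 := hz.pow_ne_one_of_pos_of_lt (by norm_num) (by norm_num)
  have hz5 : z ^ 5 ≠ 1 := hz.pow_ne_one_of_pos_of_lt (by norm_num) (by norm_num)
  have hΦ : z ^ 8 - z ^ 7 + z ^ 5 - z ^ 4 + z ^ 3 - z + 1 = 0 := by
    have key : (z ^ 3 - 1) * ((z ^ 5 - 1) * (z ^ 8 - z ^ 7 + z ^ 5 - z ^ 4 + z ^ 3 - z + 1))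
        = (z ^ 15 - 1) * (z - 1) := by ring
    rw [hz15, sub_self, zero_mul] at key
    rcases mul_eq_zero.mp key with h | h
    · exact absurd (sub_eq_zero.mp h) hz3
    rcases mul_eq_zero.mp h with h' | h'
    · exact absurd (sub_eq_zero.mp h') hz5
    · exact h'
  -- expand the sum
  have hexpand : (n 0 : ℂ) * 1 + (n 1 : ℂ) * z ^ 1 + (n 2 : ℂ) * z ^ 2 + (n 3 : ℂ) * z ^ 3
      + (n 4 : ℂ) * z ^ 4 + (n 5 : ℂ) * z ^ 5 + (n 6 : ℂ) * z ^ 6 + (n 7 : ℂ) * z ^ 7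
      + (n 8 : ℂ) * z ^ 8 + (n 9 : ℂ) * z ^ 9 + (n 10 : ℂ) * z ^ 10 + (n 11 : ℂ) * z ^ 11
      + (n 12 : ℂ) * z ^ 12 + (n 13 : ℂ) * z ^ 13 + (n 14 : ℂ) * z ^ 14 = 0 := by
    rw [← hsum']
    simp only [Finset.sum_range_succ, Finset.sum_range_zero]
    ring
  -- the coefficients in the basis 1, z, ..., z^7
  set A : ℕ → ℤ := fun t =>
    if t = 0 then (n 0 : ℤ) - n 8 - n 9 - n 10 + n 13 + n 14
    else if t = 1 then (n 1 : ℤ) + n 8 - n 11 - n 13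
    else if t = 2 then (n 2 : ℤ) + n 9 - n 12 - n 14
    else if t = 3 then (n 3 : ℤ) - n 8 - n 9 + n 14
    else if t = 4 then (n 4 : ℤ) + n 8 - n 13 - n 14
    else if t = 5 then (n 5 : ℤ) - n 8 - n 10 + n 13
    else if t = 6 then (n 6 : ℤ) - n 9 - n 11 + n 14
    else (n 7 : ℤ) + n 8 + n 9 - n 12 - n 13 - n 14 with hA
  have hAsum : ∑ t ∈ Finset.range 8, (A t : ℂ) * z ^ t = 0 := by
    simp only [Finset.sum_range_succ, Finset.sum_range_zero, hA]
    norm_num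
    push_cast
    linear_combination hexpand - (((n 8 : ℂ) + n 9 + n 10 - n 13 - n 14)
      + ((n 9 : ℂ) + n 10 + n 11 - n 14) * z + ((n 10 : ℂ) + n 11 + n 12) * z ^ 2
      + ((n 11 : ℂ) + n 12 + n 13) * z ^ 3 + ((n 12 : ℂ) + n 13 + n 14) * z ^ 4
      + ((n 13 : ℂ) + n 14) * z ^ 5 + (n 14 : ℂ) * z ^ 6) * hΦ
  have hA0 := lin_indep_pow_15 hz A hAsum
  have h0 := hA0 0 (by norm_num)
  have h1 := hA0 1 (by norm_num)
  have h2 := hA0 2 (by norm_num)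
  have h3 := hA0 3 (by norm_num)
  have h4 := hA0 4 (by norm_num)
  have h5 := hA0 5 (by norm_num)
  have h6 := hA0 6 (by norm_num)
  have h7 := hA0 7 (by norm_num)
  simp only [hA] at h0 h1 h2 h3 h4 h5 h6 h7
  norm_num at h0 h1 h2 h3 h4 h5 h6 h7
  have hcard' : n 0 + n 1 + n 2 + n 3 + n 4 + n 5 + n 6 + n 7 + n 8 + n 9 + n 10 + n 11
      + n 12 + n 13 + n 14 = 7 := by
    have := hcard
    simp only [Finset.sum_range_succ, Finset.sum_range_zero] at this
    linarith
  clear_value n z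
  -- fiber sums over residues mod 5 are congruent mod 3
  have d1 : (n 1 : ℤ) + n 6 + n 11 = (n 0 : ℤ) + n 5 + n 10
      + 3 * ((n 11 : ℤ) + n 13 - n 8 - n 10) := by linarith
  have d2 : (n 2 : ℤ) + n 7 + n 12 = (n 0 : ℤ) + n 5 + n 10
      + 3 * ((n 12 : ℤ) + n 13 + n 14 - n 8 - n 9 - n 10) := by linarith
  have d3 : (n 3 : ℤ) + n 8 + n 13 = (n 0 : ℤ) + n 5 + n 10
      + 3 * ((n 13 : ℤ) - n 10) := by linarith
  have d4 : (n 4 : ℤ) + n 9 + n 14 = (n 0 : ℤ) + n 5 + n 10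
      + 3 * ((n 13 : ℤ) + n 14 - n 8 - n 10) := by linarith
  exact aux_seven ((n 0 : ℤ) + n 5 + n 10) ((n 1 : ℤ) + n 6 + n 11) ((n 2 : ℤ) + n 7 + n 12)
    ((n 3 : ℤ) + n 8 + n 13) ((n 4 : ℤ) + n 9 + n 14) _ _ _ _
    (by omega) (by omega) (by omega) (by omega) (by omega)
    d1 d2 d3 d4 (by push_cast; linarith)
end

section
/- For every integer n ≥ 2 there exist 6-th roots of unity x_1,…,x_n (repetitions allowed) with x_1 + ⋯ + x_n = 0, while no single 6-th root of unity equals 0. -/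
noncomputable def W6ω : ℂ := ⟨-1/2, Real.sqrt 3 / 2⟩

lemma W6ω_cube : W6ω ^ 3 = 1 := by
  have h3 : Real.sqrt 3 * Real.sqrt 3 = 3 := Real.mul_self_sqrt (by norm_num)
  apply Complex.ext <;>
    simp [W6ω, pow_succ, Complex.mul_re, Complex.mul_im] <;> nlinarith [h3, Real.sqrt_nonneg 3]

lemma W6ω_pow6 : W6ω ^ 6 = 1 := by
  have : W6ω ^ 6 = (W6ω ^ 3) ^ 2 := by ring
  rw [this, W6ω_cube]; ring

lemma W6ω_sum : 1 + W6ω + W6ω ^ 2 = 0 := by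
  have h3 : Real.sqrt 3 * Real.sqrt 3 = 3 := Real.mul_self_sqrt (by norm_num)
  apply Complex.ext <;>
    simp [W6ω, pow_succ, Complex.mul_re, Complex.mul_im, Complex.add_re,
      Complex.add_im] <;> nlinarith [h3, Real.sqrt_nonneg 3]

lemma W6_exists : ∀ n : ℕ, 2 ≤ n →
    ∃ x : Fin n → ℂ, (∀ i, x i ^ 6 = 1) ∧ ∑ i, x i = 0 := by
  intro n
  induction n using Nat.strong_induction_on with
  | _ n ih =>
    intro hn
    match n, hn with
    | 2, _ =>
      refine ⟨![1, -1], ?_, ?_⟩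
      · intro i; fin_cases i <;> norm_num
      · simp [Fin.sum_univ_two]
    | 3, _ =>
      refine ⟨![1, W6ω, W6ω ^ 2], ?_, ?_⟩
      · intro i
        fin_cases i
        · norm_num
        · exact W6ω_pow6
        · show (W6ω ^ 2) ^ 6 = 1
          have : (W6ω ^ 2) ^ 6 = (W6ω ^ 6) ^ 2 := by ring
          rw [this, W6ω_pow6]; ring
      · simpa [Fin.sum_univ_three] using W6ω_sum
    | (m + 4), _ =>
      obtain ⟨x, hx1, hx2⟩ := ih (m + 2) (by omega) (by omega)
      refine ⟨Fin.cons 1 (Fin.cons (-1) x), ?_, ?_⟩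
      · intro i
        refine Fin.cases ?_ (fun j => ?_) i
        · norm_num
        · refine Fin.cases ?_ (fun k => ?_) j
          · norm_num
          · exact hx1 k
      · rw [Fin.sum_cons, Fin.sum_cons, hx2]; ring

theorem W_6_eq_N_minus_one :
    (∀ n : ℕ, 2 ≤ n → ∃ x : Fin n → ℂ, (∀ i, x i ^ 6 = 1) ∧ ∑ i, x i = 0) ∧
    (∀ x : ℂ, x ^ 6 = 1 → x ≠ 0) := by
  refine ⟨W6_exists, fun x hx h0 => ?_⟩
  rw [h0] at hx
  norm_num at hx
end
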